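/- There exists a constant K > 0 with the following property. Call a tour a finite list of points p₀, p₁, …, p_m in ℝ² with p_m = p₀; its length is Σ_{i<m} ‖p_{i+1} − p_i‖, its trace is the union of the closed segments [p_i, p_{i+1}] (the singleton {p₀} if m = 0), and its coverage is the Minkowski sum of its trace with the closed unit disk centered at the origin. Let Λ = p₀ + {i·(√3, 0) + j·(√3/2, 3/2) : i, j ∈ ℤ} be the triangular lattice of centers of a tiling of the plane by regular hexagons of diameter 2, shifted so that p₀ is a center. Then for every tour p of length at least 1 there exists a tour q whose first point is p₀, all of whose points lie in Λ, whose coverage contains the coverage of p, and whose length is at most K times the length of p. -/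

import Mathlib

/-!
Walk along the tour at unit speed and stop at the integer times `0, 1, …, n = ⌈L⌉`: consecutive
stops are at distance at most `1` and every point of the tour is within `1` of a stop. The
hexagonal lattice has covering radius `1`, so each stop can be moved to a lattice point (a
centre) at distance at most `1`; consecutive centres are then at most `3` apart, and every point
of the coverage is within `1` of a lattice point at distance at most `4` from some centre. At
each centre the new tour makes out-and-back trips to the `35` lattice points `i b₁ + j b₂` with
`|i| ≤ 3`, `|j| ≤ 2`, which include all lattice points within distance `4`, and then moves on
to the next centre. This costs at most `2 · 35 · 9 + 3` per unit of length, and `⌈L⌉ ≤ 2L`.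
-/

open Pointwise

/-- The length of a tour `p 0, p 1, …, p m`. -/
noncomputable def tourLength (m : ℕ) (p : ℕ → EuclideanSpace ℝ (Fin 2)) : ℝ :=
  ∑ i ∈ Finset.range m, ‖p (i + 1) - p i‖

/-- The trace of a tour: the union of the closed segments joining consecutive
points (the singleton `{p 0}` if `m = 0`). -/
def tourTrace (m : ℕ) (p : ℕ → EuclideanSpace ℝ (Fin 2)) :
    Set (EuclideanSpace ℝ (Fin 2)) :=
  {p 0} ∪ ⋃ i ∈ Finset.range m, segment ℝ (p i) (p (i + 1))

/-- The coverage of a tour: the Minkowski sum of its trace with the closed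
unit disk centered at the origin. -/
noncomputable def diskCoverage (m : ℕ) (p : ℕ → EuclideanSpace ℝ (Fin 2)) :
    Set (EuclideanSpace ℝ (Fin 2)) :=
  tourTrace m p + Metric.closedBall (0 : EuclideanSpace ℝ (Fin 2)) 1

/-- The first basis vector `(√3, 0)` of the triangular lattice of centers of a
tiling of the plane by regular hexagons of diameter `2`. -/
noncomputable def hexBasis₁ : EuclideanSpace ℝ (Fin 2) :=
  (WithLp.equiv 2 (Fin 2 → ℝ)).symm ![Real.sqrt 3, 0]

/-- The second basis vector `(√3/2, 3/2)` of the triangular lattice of centers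
of a tiling of the plane by regular hexagons of diameter `2`. -/
noncomputable def hexBasis₂ : EuclideanSpace ℝ (Fin 2) :=
  (WithLp.equiv 2 (Fin 2 → ℝ)).symm ![Real.sqrt 3 / 2, 3 / 2]

local notation "E2" => EuclideanSpace ℝ (Fin 2)

def hexLattice : Submodule ℤ E2 := Submodule.span ℤ {hexBasis₁, hexBasis₂}

lemma hexBasis_combination_apply_zero (a b : ℝ) :
    (a • hexBasis₁ + b • hexBasis₂) 0 = a * √3 + b * (√3 / 2) := by
  simp [hexBasis₁, hexBasis₂]

lemma hexBasis_combination_apply_one (a b : ℝ) :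
    (a • hexBasis₁ + b • hexBasis₂) 1 = b * (3 / 2) := by
  simp [hexBasis₁, hexBasis₂]

lemma mem_hexLattice_iff {v : E2} :
    v ∈ hexLattice ↔ ∃ i j : ℤ, v = (i : ℝ) • hexBasis₁ + (j : ℝ) • hexBasis₂ := by
  simp only [hexLattice, Submodule.mem_span_pair, Int.cast_smul_eq_zsmul, eq_comm]

lemma norm_le_one_of_sq_add_sq_le_one {v : E2} (h : v 0 ^ 2 + v 1 ^ 2 ≤ 1) : ‖v‖ ≤ 1 := by
  rw [EuclideanSpace.norm_eq, Real.sqrt_le_one]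
  simpa [Fin.sum_univ_two] using h

/-- The rectangle `[0, √3/2] × [0, 3/2]` is covered by the unit disks centred at two of its
opposite corners; both circles pass through `(0, 1)` and `(√3/2, 1/2)`. -/
lemma sq_add_sq_le_one_or {a w : ℝ} (ha₀ : 0 ≤ a) (ha : a ≤ √3 / 2) (hw₀ : 0 ≤ w)
    (hw : w ≤ 3 / 2) : a ^ 2 + w ^ 2 ≤ 1 ∨ (√3 / 2 - a) ^ 2 + (3 / 2 - w) ^ 2 ≤ 1 := by
  have h3 : √3 ^ 2 = 3 := Real.sq_sqrt (by norm_num)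
  have hs : 0 < √3 := by positivity
  have hfact : 0 ≤ (√3 / 2 - a) * (√3 / 2 + a) := mul_nonneg (by linarith) (by linarith)
  rcases le_or_gt w (1 / 2) with hw1 | hw1
  · left; nlinarith
  rcases le_or_gt 1 w with hw2 | hw2
  · right; nlinarith [sq_nonneg (√3 / 2 - a)]
  by_contra! hcon
  nlinarith [mul_nonneg ha₀ (by linarith : (0:ℝ) ≤ √3 - 2 * a),
    mul_pos (by linarith : (0:ℝ) < 1 - w) (by linarith : (0:ℝ) < 2 * w - 1)]

lemma exists_int_sq_add_sq_le_one (u v : ℝ) :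
    ∃ i j : ℤ, (u - (i * √3 + j * (√3 / 2))) ^ 2 + (v - j * (3 / 2)) ^ 2 ≤ 1 := by
  have hs : 0 < √3 := by positivity
  set j := ⌊2 * v / 3⌋
  set w := v - j * (3 / 2)
  have hw₀ : 0 ≤ w := by have := Int.floor_le (2 * v / 3); simp only [w]; linarith
  have hw : w ≤ 3 / 2 := by have := Int.lt_floor_add_one (2 * v / 3); simp only [w]; linarith
  set u' := u - j * (√3 / 2)
  set i := round (u' / √3)
  set δ := u' - i * √3
  have hδ : |δ| ≤ √3 / 2 := by
    have hδ' : δ = (u' / √3 - i) * √3 := by field_simp [δ]; ring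
    rw [hδ', abs_mul, abs_of_pos hs]
    nlinarith [abs_sub_round (u' / √3)]
  rcases sq_add_sq_le_one_or (abs_nonneg δ) hδ hw₀ hw with h | h
  · refine ⟨i, j, ?_⟩
    have : u - (i * √3 + j * (√3 / 2)) = δ := by simp only [δ, u']; ring
    rwa [this, ← sq_abs δ]
  · refine ⟨if 0 ≤ δ then i else i - 1, j + 1, ?_⟩
    have hx : (u - (((if 0 ≤ δ then i else i - 1 : ℤ) : ℝ) * √3 + ((j + 1 : ℤ) : ℝ) * (√3 / 2))) ^ 2
        = (√3 / 2 - |δ|) ^ 2 := by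
      split_ifs with hδ₀
      · rw [abs_of_nonneg hδ₀]; push_cast; simp only [δ, u']; ring
      · rw [abs_of_neg (not_le.1 hδ₀)]; push_cast; simp only [δ, u']; ring
    have hy : (v - ((j + 1 : ℤ) : ℝ) * (3 / 2)) ^ 2 = (3 / 2 - w) ^ 2 := by
      push_cast; simp only [w]; ring
    rwa [hx, hy]

lemma exists_mem_hexLattice_norm_sub_le_one (x : E2) : ∃ v ∈ hexLattice, ‖x - v‖ ≤ 1 := by
  obtain ⟨i, j, h⟩ := exists_int_sq_add_sq_le_one (x 0) (x 1)
  refine ⟨(i : ℝ) • hexBasis₁ + (j : ℝ) • hexBasis₂, mem_hexLattice_iff.2 ⟨i, j, rfl⟩,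
    norm_le_one_of_sq_add_sq_le_one ?_⟩
  simpa only [PiLp.sub_apply, hexBasis_combination_apply_zero,
    hexBasis_combination_apply_one] using h

lemma exists_hexLattice_approx (z x : E2) :
    ∃ w, w - z ∈ hexLattice ∧ ‖x - w‖ ≤ 1 ∧ (x = z → w = z) := by
  by_cases hx : x = z
  · exact ⟨z, by simp [hx]⟩
  obtain ⟨v, hv, h⟩ := exists_mem_hexLattice_norm_sub_le_one (x - z)
  exact ⟨z + v, by simpa using hv, by rwa [← sub_sub], fun h => absurd h hx⟩

noncomputable def hexStar (s : ℕ) : E2 :=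
  (((s : ℤ) % 7 - 3 : ℤ) : ℝ) • hexBasis₁ + (((s : ℤ) / 7 - 2 : ℤ) : ℝ) • hexBasis₂

lemma hexStar_mem_hexLattice (s : ℕ) : hexStar s ∈ hexLattice :=
  mem_hexLattice_iff.2 ⟨_, _, rfl⟩

lemma norm_hexBasis₁ : ‖hexBasis₁‖ = √3 := by
  simp [EuclideanSpace.norm_eq, hexBasis₁, Fin.sum_univ_two]

lemma norm_hexBasis₂ : ‖hexBasis₂‖ = √3 := by
  simp only [EuclideanSpace.norm_eq, hexBasis₂, Fin.sum_univ_two]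
  congr 1
  simp [div_pow]
  norm_num

lemma norm_hexStar_le {s : ℕ} (hs : s < 35) : ‖hexStar s‖ ≤ 9 := by
  have hi : |(((s : ℤ) % 7 - 3 : ℤ) : ℝ)| ≤ 3 := by
    rw [← Int.cast_abs]
    exact_mod_cast (abs_le.2 ⟨by omega, by omega⟩ : |(s : ℤ) % 7 - 3| ≤ 3)
  have hj : |(((s : ℤ) / 7 - 2 : ℤ) : ℝ)| ≤ 2 := by
    rw [← Int.cast_abs]
    exact_mod_cast (abs_le.2 ⟨by omega, by omega⟩ : |(s : ℤ) / 7 - 2| ≤ 2)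
  have h3 : √3 ≤ 9 / 5 := Real.sqrt_le_iff.2 ⟨by norm_num, by norm_num⟩
  calc ‖hexStar s‖
      ≤ |(((s : ℤ) % 7 - 3 : ℤ) : ℝ)| * √3 + |(((s : ℤ) / 7 - 2 : ℤ) : ℝ)| * √3 := by
        refine (norm_add_le _ _).trans_eq ?_
        rw [norm_smul, norm_smul, norm_hexBasis₁, norm_hexBasis₂, Real.norm_eq_abs,
          Real.norm_eq_abs]
    _ ≤ 9 := by nlinarith [abs_nonneg (((s : ℤ) % 7 - 3 : ℤ) : ℝ), Real.sqrt_nonneg 3]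

lemma exists_hexStar_eq {v : E2} (hv : v ∈ hexLattice) (h : ‖v‖ ≤ 4) :
    ∃ s < 35, hexStar s = v := by
  obtain ⟨i, j, rfl⟩ := mem_hexLattice_iff.1 hv
  have h3 : √3 ^ 2 = 3 := Real.sq_sqrt (by norm_num)
  have hs : 8 / 5 < √3 := Real.lt_sqrt_of_sq_lt (by norm_num)
  have hx := (abs_le.1 ((Real.norm_eq_abs _).symm.trans_le ((PiLp.norm_apply_le _ 0).trans h)))
  have hy := (abs_le.1 ((Real.norm_eq_abs _).symm.trans_le ((PiLp.norm_apply_le _ 1).trans h)))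
  rw [hexBasis_combination_apply_zero] at hx
  rw [hexBasis_combination_apply_one] at hy
  have hj₁ : -3 < j := by exact_mod_cast (by linarith : (-3 : ℝ) < j)
  have hj₂ : j < 3 := by exact_mod_cast (by linarith : (j : ℝ) < 3)
  have hij₁ : -5 < 2 * i + j := by exact_mod_cast (by nlinarith : (-5 : ℝ) < 2 * i + j)
  have hij₂ : 2 * i + j < 5 := by exact_mod_cast (by nlinarith : (2 * i + j : ℝ) < 5)
  refine ⟨(i + 3 + 7 * (j + 2)).toNat, by omega, ?_⟩
  have e₁ : (((i + 3 + 7 * (j + 2)).toNat : ℤ) % 7 - 3) = i := by omega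
  have e₂ : (((i + 3 + 7 * (j + 2)).toNat : ℤ) / 7 - 2) = j := by omega
  rw [hexStar, e₁, e₂]

lemma tourLength_succ (m : ℕ) (p : ℕ → E2) :
    tourLength (m + 1) p = tourLength m p + ‖p (m + 1) - p m‖ :=
  Finset.sum_range_succ _ _

lemma tourLength_nonneg (m : ℕ) (p : ℕ → E2) : 0 ≤ tourLength m p :=
  Finset.sum_nonneg fun _ _ => norm_nonneg _

lemma tourLength_mono (p : ℕ → E2) : Monotone (tourLength · p) :=
  monotone_nat_of_le_succ fun m => by
    simp only [tourLength_succ]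
    linarith [norm_nonneg (p (m + 1) - p m)]

lemma tourLength_add_norm_le {m i : ℕ} (p : ℕ → E2) (hi : i < m) :
    tourLength i p + ‖p (i + 1) - p i‖ ≤ tourLength m p :=
  tourLength_succ i p ▸ tourLength_mono p (Nat.succ_le_of_lt hi)

lemma mem_tourTrace_of_lt {m t : ℕ} {p : ℕ → E2} (ht : t < m) : p t ∈ tourTrace m p :=
  Or.inr (Set.mem_biUnion (Finset.mem_range.2 ht) (left_mem_segment ℝ _ _))

lemma mem_diskCoverage_iff {m : ℕ} {p : ℕ → E2} {x : E2} :
    x ∈ diskCoverage m p ↔ ∃ y ∈ tourTrace m p, ‖x - y‖ ≤ 1 := by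
  simp only [diskCoverage, Set.mem_add, mem_closedBall_zero_iff]
  constructor
  · rintro ⟨y, hy, u, hu, rfl⟩
    exact ⟨y, hy, by simpa using hu⟩
  · rintro ⟨y, hy, h⟩
    exact ⟨y, hy, x - y, h, add_sub_cancel _ _⟩

noncomputable def blockTour (c w : ℕ → E2) (N t : ℕ) : E2 :=
  c (t / (N + 1)) + w (t % (N + 1))

lemma blockTour_mul_add (c w : ℕ → E2) {N r : ℕ} (k : ℕ) (hr : r ≤ N) :
    blockTour c w N (k * (N + 1) + r) = c k + w r := by
  have hr' : r < N + 1 := Nat.lt_succ_of_le hr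
  rw [blockTour, mul_comm, Nat.mul_add_div N.succ_pos, Nat.div_eq_of_lt hr', add_zero,
    Nat.mul_add_mod, Nat.mod_eq_of_lt hr']

/-- Between consecutive blocks the tour jumps from `c k + w N = c k` to `c (k + 1) + w 0`. -/
lemma tourLength_blockTour (c w : ℕ → E2) {N : ℕ} (hw₀ : w 0 = 0) (hwN : w N = 0) (n : ℕ) :
    tourLength (n * (N + 1)) (blockTour c w N) = n * tourLength N w + tourLength n c := by
  induction n with
  | zero => simp [tourLength]
  | succ n ih =>
    have hblock : ∑ r ∈ Finset.range (N + 1),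
        ‖blockTour c w N (n * (N + 1) + r + 1) - blockTour c w N (n * (N + 1) + r)‖ =
          tourLength N w + ‖c (n + 1) - c n‖ := by
      rw [Finset.sum_range_succ, tourLength]
      congr 1
      · refine Finset.sum_congr rfl fun r hr => ?_
        have hr := Finset.mem_range.1 hr
        rw [add_assoc, blockTour_mul_add c w n hr, blockTour_mul_add c w n hr.le,
          add_sub_add_left_eq_sub]
      · rw [add_assoc, ← add_one_mul, ← add_zero ((n + 1) * (N + 1)),
          blockTour_mul_add c w _ N.zero_le, blockTour_mul_add c w n le_rfl, hw₀, hwN]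
        simp
    rw [add_one_mul, tourLength, Finset.sum_range_add, ← tourLength, ih, hblock, tourLength_succ]
    push_cast
    ring

noncomputable def starWalk (d : ℕ → E2) (r : ℕ) : E2 := if r % 2 = 1 then d (r / 2) else 0

lemma tourLength_starWalk (d : ℕ → E2) (M : ℕ) :
    tourLength (2 * M) (starWalk d) = 2 * ∑ s ∈ Finset.range M, ‖d s‖ := by
  induction M with
  | zero => simp [tourLength]
  | succ M ih =>
    have h₁ : (2 * M + 1) / 2 = M := by omega
    rw [show 2 * (M + 1) = 2 * M + 1 + 1 by ring, tourLength_succ, tourLength_succ, ih,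
      Finset.sum_range_succ]
    simp [starWalk, Nat.add_mod, h₁]
    ring

section NormedSpace

variable {E : Type*} [NormedAddCommGroup E] [NormedSpace ℝ E]

lemma norm_div_norm_smul_le (x : ℝ) (v : E) : ‖(x / ‖v‖) • v‖ ≤ |x| := by
  rcases eq_or_ne v 0 with rfl | hv
  · simp
  · rw [norm_smul, norm_div, norm_norm, Real.norm_eq_abs,
      div_mul_cancel₀ _ (norm_ne_zero_iff.2 hv)]

lemma mul_norm_div_norm_smul (θ : ℝ) (v : E) : (θ * ‖v‖ / ‖v‖) • v = θ • v := by
  rcases eq_or_ne v 0 with rfl | hv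
  · simp
  · rw [mul_div_cancel_right₀ _ (norm_ne_zero_iff.2 hv)]

lemma norm_div_self_smul (v : E) : (‖v‖ / ‖v‖) • v = v := by
  simpa using mul_norm_div_norm_smul 1 v

end NormedSpace

/-- The arclength already travelled along the `i`-th segment at time `t`. -/
noncomputable def segProgress (p : ℕ → E2) (i : ℕ) (t : ℝ) : ℝ :=
  max 0 (min (t - tourLength i p) ‖p (i + 1) - p i‖)

/-- The tour traversed at unit speed, stopped at `p 0` before time `0` and at `p m` after
time `tourLength m p`. A degenerate segment contributes `(0 / 0) • 0 = 0`. -/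
noncomputable def arcParam (m : ℕ) (p : ℕ → E2) (t : ℝ) : E2 :=
  p 0 + ∑ i ∈ Finset.range m, (segProgress p i t / ‖p (i + 1) - p i‖) • (p (i + 1) - p i)

lemma segProgress_mono (p : ℕ → E2) (i : ℕ) : Monotone (segProgress p i) :=
  fun _ _ h => max_le_max le_rfl (min_le_min_right _ (sub_le_sub_right h _))

lemma sum_segProgress (m : ℕ) (p : ℕ → E2) (t : ℝ) :
    ∑ i ∈ Finset.range m, segProgress p i t = max 0 (min t (tourLength m p)) := by
  induction m with
  | zero => simp [tourLength]
  | succ m ih =>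
    rw [Finset.sum_range_succ, ih, segProgress, tourLength_succ]
    have := tourLength_nonneg m p
    have := norm_nonneg (p (m + 1) - p m)
    simp only [max_def, min_def]
    split_ifs <;> linarith

lemma norm_arcParam_sub_le (m : ℕ) (p : ℕ → E2) {t t' : ℝ} (h : t ≤ t') :
    ‖arcParam m p t' - arcParam m p t‖ ≤ t' - t := by
  have hmono i := segProgress_mono p i h
  calc ‖arcParam m p t' - arcParam m p t‖
      = ‖∑ i ∈ Finset.range m, ((segProgress p i t' - segProgress p i t) / ‖p (i + 1) - p i‖) •
          (p (i + 1) - p i)‖ := by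
        simp only [arcParam, add_sub_add_left_eq_sub, ← Finset.sum_sub_distrib, ← sub_smul, sub_div]
    _ ≤ ∑ i ∈ Finset.range m, (segProgress p i t' - segProgress p i t) := by
        refine (norm_sum_le _ _).trans (Finset.sum_le_sum fun i _ => ?_)
        exact (norm_div_norm_smul_le _ _).trans_eq (abs_of_nonneg (sub_nonneg.2 (hmono i)))
    _ ≤ t' - t := by
        rw [Finset.sum_sub_distrib, sum_segProgress, sum_segProgress]
        simp only [max_def, min_def]
        split_ifs <;> linarith

lemma arcParam_zero (m : ℕ) (p : ℕ → E2) : arcParam m p 0 = p 0 := by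
  refine add_eq_left.2 (Finset.sum_eq_zero fun i _ => ?_)
  have : segProgress p i 0 = 0 :=
    max_eq_left (min_le_of_left_le (by linarith [tourLength_nonneg i p]))
  simp [this]

lemma arcParam_of_le {m : ℕ} {p : ℕ → E2} {t : ℝ} (ht : tourLength m p ≤ t) :
    arcParam m p t = p m := by
  have hfull : ∀ i ∈ Finset.range m, segProgress p i t = ‖p (i + 1) - p i‖ := fun i hi => by
    have := tourLength_add_norm_le p (Finset.mem_range.1 hi)
    have := norm_nonneg (p (i + 1) - p i)
    exact (max_eq_right (le_min (by linarith) this)).trans (min_eq_right (by linarith))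
  rw [arcParam, Finset.sum_congr rfl fun i hi => by rw [hfull i hi, norm_div_self_smul],
    Finset.sum_range_sub, add_sub_cancel]

lemma arcParam_segment {m i : ℕ} (p : ℕ → E2) (hi : i < m) {θ : ℝ} (hθ₀ : 0 ≤ θ) (hθ₁ : θ ≤ 1) :
    arcParam m p (tourLength i p + θ * ‖p (i + 1) - p i‖) = p i + θ • (p (i + 1) - p i) := by
  have hθd : θ * ‖p (i + 1) - p i‖ ≤ ‖p (i + 1) - p i‖ :=
    mul_le_of_le_one_left (norm_nonneg _) hθ₁
  induction m with
  | zero => exact absurd hi (Nat.not_lt_zero _)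
  | succ m ih =>
    rw [arcParam, Finset.sum_range_succ, ← add_assoc, ← arcParam]
    rcases Nat.lt_succ_iff_lt_or_eq.1 hi with hi | rfl
    · have hm := tourLength_add_norm_le p hi
      have : segProgress p m (tourLength i p + θ * ‖p (i + 1) - p i‖) = 0 :=
        max_eq_left (min_le_of_left_le (by linarith))
      rw [this, zero_div, zero_smul, add_zero, ih hi]
    · have : segProgress p i (tourLength i p + θ * ‖p (i + 1) - p i‖) =
          θ * ‖p (i + 1) - p i‖ := by
        rw [segProgress, add_sub_cancel_left, min_eq_left hθd]
        exact max_eq_right (by positivity)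
      rw [this, arcParam_of_le (by nlinarith [norm_nonneg (p (i + 1) - p i)]),
        mul_norm_div_norm_smul]

lemma exists_arcParam_eq {m : ℕ} {p : ℕ → E2} {y : E2} (hy : y ∈ tourTrace m p) :
    ∃ t ∈ Set.Icc 0 (tourLength m p), arcParam m p t = y := by
  rcases hy with rfl | hy
  · exact ⟨0, ⟨le_rfl, tourLength_nonneg m p⟩, arcParam_zero m p⟩
  obtain ⟨i, hi, hy⟩ := Set.mem_iUnion₂.1 hy
  rw [segment_eq_image'] at hy
  obtain ⟨θ, ⟨hθ₀, hθ₁⟩, rfl⟩ := hy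
  have hi := Finset.mem_range.1 hi
  have hm := tourLength_add_norm_le p hi
  refine ⟨_, ⟨?_, ?_⟩, arcParam_segment p hi hθ₀ hθ₁⟩
  · have := tourLength_nonneg i p
    positivity
  · nlinarith [norm_nonneg (p (i + 1) - p i)]

noncomputable def hexTour (c : ℕ → E2) : ℕ → E2 := blockTour c (starWalk hexStar) 70

lemma hexTour_mul (c : ℕ → E2) (k : ℕ) : hexTour c (k * 71) = c k := by
  simpa [hexTour, starWalk] using blockTour_mul_add c (starWalk hexStar) k (Nat.zero_le 70)

lemma tourLength_hexTour_le {c : ℕ → E2} (hc : ∀ k, ‖c (k + 1) - c k‖ ≤ 3) (n : ℕ) :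
    tourLength (n * 71) (hexTour c) ≤ 633 * n := by
  have hstar : tourLength 70 (starWalk hexStar) ≤ 630 := by
    rw [show 70 = 2 * 35 from rfl, tourLength_starWalk]
    have := Finset.sum_le_sum fun s (hs : s ∈ Finset.range 35) =>
      norm_hexStar_le (Finset.mem_range.1 hs)
    norm_num at this
    linarith
  have hcenters : tourLength n c ≤ 3 * n := by
    calc tourLength n c ≤ ∑ _k ∈ Finset.range n, (3 : ℝ) := Finset.sum_le_sum fun k _ => hc k
      _ = 3 * n := by simp [mul_comm]
  rw [hexTour, tourLength_blockTour c _ (by simp [starWalk]) (by simp [starWalk])]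
  nlinarith [(n.cast_nonneg : (0 : ℝ) ≤ n)]

lemma hexTour_sub_mem_hexLattice {c : ℕ → E2} {z : E2} (hc : ∀ k, c k - z ∈ hexLattice)
    (t : ℕ) : hexTour c t - z ∈ hexLattice := by
  rw [hexTour, blockTour, add_sub_right_comm]
  refine hexLattice.add_mem (hc _) ?_
  unfold starWalk
  split_ifs
  exacts [hexStar_mem_hexLattice _, hexLattice.zero_mem]

lemma diskCoverage_subset_hexTour {m n : ℕ} {p c : ℕ → E2}
    (hnear : ∀ y ∈ tourTrace m p, ∃ k < n, ‖y - c k‖ ≤ 2) :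
    diskCoverage m p ⊆ diskCoverage (n * 71) (hexTour c) := by
  intro x hx
  obtain ⟨y, hy, hxy⟩ := mem_diskCoverage_iff.1 hx
  obtain ⟨k, hk, hyc⟩ := hnear y hy
  obtain ⟨v, hv, hxv⟩ := exists_mem_hexLattice_norm_sub_le_one (x - c k)
  have hv4 : ‖v‖ ≤ 4 := by
    linarith [norm_le_norm_add_norm_sub' v (x - c k), norm_sub_rev v (x - c k),
      norm_sub_le_norm_sub_add_norm_sub x y (c k)]
  obtain ⟨s, hs, rfl⟩ := exists_hexStar_eq hv hv4
  have hvertex : hexTour c (k * 71 + (2 * s + 1)) = c k + hexStar s := by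
    rw [hexTour, blockTour_mul_add c _ k (by omega : 2 * s + 1 ≤ 70), starWalk]
    simp [Nat.add_mod, show (2 * s + 1) / 2 = s by omega]
  have hindex : k * 71 + (2 * s + 1) < n * 71 := by omega
  refine mem_diskCoverage_iff.2 ⟨_, mem_tourTrace_of_lt hindex, ?_⟩
  rwa [hvertex, ← sub_sub]

lemma exists_hexCenters {m : ℕ} {p : ℕ → E2} (hclosed : p m = p 0) (hL : 0 < tourLength m p) :
    ∃ c : ℕ → E2, c 0 = p 0 ∧ c ⌈tourLength m p⌉₊ = p 0 ∧ (∀ k, c k - p 0 ∈ hexLattice) ∧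
      (∀ k, ‖c (k + 1) - c k‖ ≤ 3) ∧
      ∀ y ∈ tourTrace m p, ∃ k < ⌈tourLength m p⌉₊, ‖y - c k‖ ≤ 2 := by
  set n := ⌈tourLength m p⌉₊
  set a : ℕ → E2 := fun k => arcParam m p k
  have ha₀ : a 0 = p 0 := by simpa [a] using arcParam_zero m p
  have haₙ : a n = p 0 := (arcParam_of_le (Nat.le_ceil _)).trans hclosed
  choose c hcΛ hca hcp using fun k => exists_hexLattice_approx (p 0) (a k)
  refine ⟨c, hcp 0 ha₀, hcp n haₙ, hcΛ, fun k => ?_, fun y hy => ?_⟩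
  · have hstep : ‖a (k + 1) - a k‖ ≤ 1 := by
      have := norm_arcParam_sub_le m p (Nat.cast_le.2 k.le_succ)
      simpa [a] using this
    linarith [norm_sub_le_norm_sub_add_norm_sub (c (k + 1)) (a (k + 1)) (c k),
      norm_sub_le_norm_sub_add_norm_sub (a (k + 1)) (a k) (c k),
      norm_sub_rev (c (k + 1)) (a (k + 1)), hca k, hca (k + 1)]
  obtain ⟨t, ⟨ht₀, htL⟩, rfl⟩ := exists_arcParam_eq hy
  have hya : ‖arcParam m p t - a ⌈t⌉₊‖ ≤ 1 := by
    rw [norm_sub_rev]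
    linarith [norm_arcParam_sub_le m p (Nat.le_ceil t), Nat.ceil_lt_add_one ht₀]
  have hyc : ‖arcParam m p t - c ⌈t⌉₊‖ ≤ 2 := by
    linarith [norm_sub_le_norm_sub_add_norm_sub (arcParam m p t) (a ⌈t⌉₊) (c ⌈t⌉₊), hca ⌈t⌉₊]
  rcases (Nat.ceil_mono htL).lt_or_eq with hk | hk
  · exact ⟨_, hk, hyc⟩
  · refine ⟨0, Nat.ceil_pos.2 hL, ?_⟩
    rwa [hcp 0 ha₀, ← hcp n haₙ, show n = ⌈t⌉₊ from hk.symm]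

theorem grid_discretization_disk :
    ∃ K : ℝ, 0 < K ∧
      ∀ (m : ℕ) (p : ℕ → EuclideanSpace ℝ (Fin 2)), p m = p 0 →
        1 ≤ tourLength m p →
        ∃ (m' : ℕ) (q : ℕ → EuclideanSpace ℝ (Fin 2)),
          q m' = q 0 ∧
          q 0 = p 0 ∧
          (∀ k ≤ m', ∃ i j : ℤ,
            q k = p 0 + ((i : ℝ) • hexBasis₁ + (j : ℝ) • hexBasis₂)) ∧
          diskCoverage m p ⊆ diskCoverage m' q ∧
          tourLength m' q ≤ K * tourLength m p := by
  refine ⟨1266, by norm_num, fun m p hclosed hL => ?_⟩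
  obtain ⟨c, hc₀, hcₙ, hcΛ, hstep, hnear⟩ := exists_hexCenters hclosed (by linarith)
  have hn : (⌈tourLength m p⌉₊ : ℝ) ≤ 2 * tourLength m p := by
    linarith [Nat.ceil_lt_add_one (zero_le_one.trans hL)]
  have hq₀ : hexTour c 0 = p 0 := by simpa [hc₀] using hexTour_mul c 0
  refine ⟨⌈tourLength m p⌉₊ * 71, hexTour c, by rw [hexTour_mul, hcₙ, hq₀], hq₀,
    fun k _ => ?_, diskCoverage_subset_hexTour hnear, ?_⟩
  · obtain ⟨i, j, h⟩ := mem_hexLattice_iff.1 (hexTour_sub_mem_hexLattice hcΛ k)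
    exact ⟨i, j, by rw [← h, add_sub_cancel]⟩
  · linarith [tourLength_hexTour_le hstep ⌈tourLength m p⌉₊]
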